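/- arXiv:1607.05568 — 5 statements merged into one kernel-verified Lean document; each statement's English description precedes it below -/
import Mathlib

section
/- For every face F of the positive semidefinite cone S^n_+, the set S^n_+ + F^⊥ is closed, where F^⊥ = {Z ∈ S^n : Z • X = 0 for all X ∈ F}. -/
open Matrix Set

noncomputable section

abbrev Mat (n : ℕ) := Matrix (Fin n) (Fin n) ℝ

def ip {n : ℕ} (A B : Mat n) : ℝ := ∑ i, ∑ j, A i j * B i j

def psdCone (n : ℕ) : Set (Mat n) := {X | X.PosSemidef}

def IsFaceOf {n : ℕ} (C F : Set (Mat n)) : Prop :=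
  F ⊆ C ∧ Convex ℝ F ∧
    ∀ x₁ ∈ C, ∀ x₂ ∈ C, ∀ t : ℝ, 0 < t → t < 1 →
      t • x₁ + (1 - t) • x₂ ∈ F → x₁ ∈ F ∧ x₂ ∈ F

/-- `F^⊥ = {Z ∈ S^n : Z • X = 0 for all X ∈ F}` within symmetric matrices. -/
def perp {n : ℕ} (F : Set (Mat n)) : Set (Mat n) :=
  {Z | Z.IsSymm ∧ ∀ X ∈ F, ip Z X = 0}

/-! For a nonempty face `F`, the vectors `v` with `v vᵀ ∈ F` form a subspace `U` (parallelogram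
law), and every `X ∈ F`, written as a sum of rank-one PSD matrices, has all its summands in `F`.
So a symmetric `Z` lies in `F^⊥` iff its quadratic form vanishes on `U`, and `S^n_+ + F^⊥` is the
set of symmetric `W` whose quadratic form is nonnegative on `U`, an intersection of closed
half-spaces: for a projection `P` onto `U`, `W = Pᵀ W P + (W - Pᵀ W P)` is the decomposition. -/

theorem ip_vecMulVec_self {n : ℕ} (Z : Mat n) (v : Fin n → ℝ) :
    ip Z (vecMulVec v v) = v ⬝ᵥ Z *ᵥ v := by
  simp only [ip, vecMulVec_apply, dotProduct, mulVec, Finset.mul_sum]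
  exact Finset.sum_congr rfl fun i _ => Finset.sum_congr rfl fun j _ => by ring

theorem ip_sum {n : ℕ} {ι : Type*} (Z : Mat n) (s : Finset ι) (M : ι → Mat n) :
    ip Z (∑ k ∈ s, M k) = ∑ k ∈ s, ip Z (M k) := by
  simp only [ip, Matrix.sum_apply, Finset.mul_sum]
  rw [Finset.sum_comm (s := s)]
  exact Finset.sum_congr rfl fun i _ => Finset.sum_comm

theorem posSemidef_vecMulVec_self {m : Type*} [Fintype m] (v : m → ℝ) :
    (vecMulVec v v).PosSemidef := by
  simpa using posSemidef_vecMulVec_self_star v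

theorem dotProduct_transpose_mul_mul_mulVec {m k : Type*} [Fintype m] [Fintype k]
    {R : Type*} [CommSemiring R] (P : Matrix m k R) (W : Matrix m m R) (x y : k → R) :
    x ⬝ᵥ (Pᵀ * W * P) *ᵥ y = P *ᵥ x ⬝ᵥ W *ᵥ (P *ᵥ y) := by
  rw [← mulVec_mulVec, ← mulVec_mulVec, dotProduct_mulVec, vecMul_transpose]

theorem posSemidef_transpose_mul_mul_of_nonneg {m k : Type*} [Fintype m] [Fintype k]
    {P : Matrix m k ℝ} {W : Matrix m m ℝ} (hW : W.IsSymm)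
    (hPW : ∀ x, 0 ≤ P *ᵥ x ⬝ᵥ W *ᵥ (P *ᵥ x)) :
    (Pᵀ * W * P).PosSemidef := by
  refine .of_dotProduct_mulVec_nonneg ?_ fun x => ?_
  · rw [isHermitian_iff_isSymm]
    simp [IsSymm, Matrix.mul_assoc, hW.eq]
  · rw [star_trivial, dotProduct_transpose_mul_mul_mulVec]
    exact hPW x

theorem Submodule.exists_matrix_mulVec_mem_and_eq {K ι : Type*} [Field K] [Fintype ι]
    [DecidableEq ι] (U : Submodule K (ι → K)) :
    ∃ P : Matrix ι ι K, (∀ x, P *ᵥ x ∈ U) ∧ ∀ v ∈ U, P *ᵥ v = v := by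
  obtain ⟨g, hg⟩ := U.subtype.exists_leftInverse_of_injective U.ker_subtype
  refine ⟨LinearMap.toMatrix' (U.subtype ∘ₗ g), fun x => by simp, fun v hv => ?_⟩
  simpa using congrArg Subtype.val (LinearMap.congr_fun hg ⟨v, hv⟩)

namespace IsFaceOf

variable {n : ℕ} {F : Set (Mat n)}

theorem smul_mem (hF : IsFaceOf (psdCone n) F) {X : Mat n} (hX : X ∈ F) {s : ℝ} (hs : 0 < s) :
    s • X ∈ F := by
  have hXpsd : X.PosSemidef := hF.1 hX
  -- `X = (1 + s)⁻¹ • (s • X) + (s / (1 + s)) • (s⁻¹ • X)`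
  refine (hF.2.2 (s • X) (hXpsd.smul hs.le) (s⁻¹ • X) (hXpsd.smul (inv_nonneg.2 hs.le))
    (1 + s)⁻¹ (by positivity) (inv_lt_one_of_one_lt₀ (by linarith)) ?_).1
  convert hX using 1
  rw [smul_smul, smul_smul, ← add_smul]
  convert one_smul ℝ X using 2
  field_simp
  ring

theorem left_mem_of_add_mem (hF : IsFaceOf (psdCone n) F) {A B : Mat n} (hA : A.PosSemidef)
    (hB : B.PosSemidef) (hAB : A + B ∈ F) : A ∈ F := by
  have hsplit : (1 / 2 : ℝ) • ((2 : ℝ) • A) + (1 - 1 / 2 : ℝ) • ((2 : ℝ) • B) = A + B := by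
    module
  have h2A : (2 : ℝ) • A ∈ F :=
    (hF.2.2 _ (hA.smul zero_le_two) _ (hB.smul zero_le_two) (1 / 2) (by norm_num) (by norm_num)
      (hsplit ▸ hAB)).1
  simpa using hF.smul_mem h2A (inv_pos.2 zero_lt_two)

theorem zero_mem (hF : IsFaceOf (psdCone n) F) (hne : F.Nonempty) : (0 : Mat n) ∈ F := by
  obtain ⟨X, hX⟩ := hne
  exact hF.left_mem_of_add_mem .zero (hF.1 hX) (by simpa using hX)

theorem mem_of_sum_mem (hF : IsFaceOf (psdCone n) F) {ι : Type*} [Fintype ι] {M : ι → Mat n}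
    (hM : ∀ k, (M k).PosSemidef) (hsum : ∑ k, M k ∈ F) (k : ι) : M k ∈ F := by
  classical
  rw [← Finset.add_sum_erase _ _ (Finset.mem_univ k)] at hsum
  exact hF.left_mem_of_add_mem (hM k) (posSemidef_sum _ fun l _ => hM l) hsum

theorem exists_submodule_vecMulVec_mem_iff (hF : IsFaceOf (psdCone n) F) (hne : F.Nonempty) :
    ∃ U : Submodule ℝ (Fin n → ℝ), ∀ v, v ∈ U ↔ vecMulVec v v ∈ F := by
  have h0 := hF.zero_mem hne
  refine ⟨{ carrier := {v | vecMulVec v v ∈ F}, add_mem' := ?_, zero_mem' := ?_, smul_mem' := ?_ },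
    fun v => Iff.rfl⟩
  · intro u v hu hv
    have hmid := hF.2.1 hu hv (by norm_num : (0 : ℝ) ≤ 1 / 2) (by norm_num : (0 : ℝ) ≤ 1 / 2)
      (by norm_num)
    have hpar : (4 : ℝ) • ((1 / 2 : ℝ) • vecMulVec u u + (1 / 2 : ℝ) • vecMulVec v v) =
        vecMulVec (u + v) (u + v) + vecMulVec (u - v) (u - v) := by
      ext i j
      simp only [Matrix.smul_apply, Matrix.add_apply, vecMulVec_apply, smul_eq_mul, Pi.add_apply,
        Pi.sub_apply]
      ring
    exact hF.left_mem_of_add_mem (posSemidef_vecMulVec_self _) (posSemidef_vecMulVec_self _)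
      (hpar ▸ hF.smul_mem hmid (by norm_num))
  · simpa using h0
  · intro c v hv
    rcases eq_or_ne c 0 with rfl | hc
    · simpa using h0
    · change vecMulVec (c • v) (c • v) ∈ F
      rw [smul_vecMulVec, vecMulVec_smul, smul_smul]
      exact hF.smul_mem hv (mul_self_pos.2 hc)

theorem mem_perp_iff (hF : IsFaceOf (psdCone n) F) {U : Submodule ℝ (Fin n → ℝ)}
    (hU : ∀ v, v ∈ U ↔ vecMulVec v v ∈ F) {Z : Mat n} :
    Z ∈ perp F ↔ Z.IsSymm ∧ ∀ v ∈ U, v ⬝ᵥ Z *ᵥ v = 0 := by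
  refine and_congr_right fun _ => ⟨fun hZ v hv => ?_, fun hZ X hX => ?_⟩
  · rw [← ip_vecMulVec_self]
    exact hZ _ ((hU v).1 hv)
  · obtain ⟨m, w, rfl⟩ := posSemidef_iff_eq_sum_vecMulVec.1 (hF.1 hX)
    simp only [star_trivial] at hX ⊢
    have hw (k : Fin m) : w k ∈ U :=
      (hU _).2 (hF.mem_of_sum_mem (fun k => posSemidef_vecMulVec_self (w k)) hX k)
    simp [ip_sum, ip_vecMulVec_self, hZ _ (hw _)]

theorem psdCone_add_perp_eq (hF : IsFaceOf (psdCone n) F) {U : Submodule ℝ (Fin n → ℝ)}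
    (hU : ∀ v, v ∈ U ↔ vecMulVec v v ∈ F) :
    {W : Mat n | ∃ A ∈ psdCone n, ∃ Z ∈ perp F, W = A + Z} =
      {W | W.IsSymm ∧ ∀ v ∈ U, 0 ≤ v ⬝ᵥ W *ᵥ v} := by
  ext W
  constructor
  · rintro ⟨A, hA, Z, hZ, rfl⟩
    obtain ⟨hZsymm, hZU⟩ := (hF.mem_perp_iff hU).1 hZ
    refine ⟨(isHermitian_iff_isSymm.1 hA.1).add hZsymm, fun v hv => ?_⟩
    rw [add_mulVec, dotProduct_add, hZU v hv, add_zero]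
    simpa using hA.dotProduct_mulVec_nonneg v
  · rintro ⟨hW, hWU⟩
    obtain ⟨P, hPU, hPfix⟩ := U.exists_matrix_mulVec_mem_and_eq
    have hA : (Pᵀ * W * P).PosSemidef :=
      posSemidef_transpose_mul_mul_of_nonneg hW fun x => hWU _ (hPU x)
    have hZ : W - Pᵀ * W * P ∈ perp F := by
      refine (hF.mem_perp_iff hU).2 ⟨hW.sub (isHermitian_iff_isSymm.1 hA.1), fun v hv => ?_⟩
      rw [sub_mulVec, dotProduct_sub, dotProduct_transpose_mul_mul_mulVec, hPfix v hv, sub_self]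
    exact ⟨_, hA, _, hZ, (add_sub_cancel _ _).symm⟩

end IsFaceOf

theorem isClosed_setOf_isSymm {m : Type*} : IsClosed {W : Matrix m m ℝ | W.IsSymm} :=
  isClosed_eq continuous_id.matrix_transpose continuous_id

theorem isClosed_setOf_isSymm_and_forall_nonneg {m : Type*} [Fintype m] (S : Set (m → ℝ)) :
    IsClosed {W : Matrix m m ℝ | W.IsSymm ∧ ∀ v ∈ S, 0 ≤ v ⬝ᵥ W *ᵥ v} := by
  simp only [ofPred_and, ofPred_forall]
  exact isClosed_setOf_isSymm.inter
    (isClosed_biInter fun v _ => isClosed_le continuous_const (by fun_prop))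

theorem psdCone_add_perp_empty (n : ℕ) :
    {W : Mat n | ∃ A ∈ psdCone n, ∃ Z ∈ perp (∅ : Set (Mat n)), W = A + Z} = {W | W.IsSymm} := by
  ext W
  simp only [perp, mem_empty_iff_false, IsEmpty.forall_iff, implies_true, and_true, mem_ofPred_eq]
  refine ⟨?_, fun hW => ⟨0, .zero, W, hW, (zero_add W).symm⟩⟩
  rintro ⟨A, hA, Z, hZ, rfl⟩
  exact (isHermitian_iff_isSymm.1 hA.1).add hZ

/-- For every face `F` of the PSD cone, the set `S^n_+ + F^⊥` is closed. -/
theorem psdCone_add_perp_isClosed (n : ℕ) (F : Set (Mat n))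
    (hF : IsFaceOf (psdCone n) F) :
    IsClosed {W : Mat n | ∃ A ∈ psdCone n, ∃ Z ∈ perp F, W = A + Z} := by
  rcases F.eq_empty_or_nonempty with rfl | hne
  · rw [psdCone_add_perp_empty]
    exact isClosed_setOf_isSymm
  · obtain ⟨U, hU⟩ := hF.exists_submodule_vecMulVec_mem_iff hne
    rw [hF.psdCone_add_perp_eq hU]
    exact isClosed_setOf_isSymm_and_forall_nonneg (U : Set (Fin n → ℝ))
end
end

section
/- For every face F of S^n_+, the dual cone F* = {Z ∈ S^n : Z • X ≥ 0 for all X ∈ F} equals S^n_+ + F^⊥. -/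
open Matrix Set

noncomputable section

/-!
Choose `X₀ ∈ F` of minimal nullity. Since `F` is closed under addition and
`ker (X₀ + X) = ker X₀ ∩ ker X` for positive semidefinite matrices, every `X ∈ F` satisfies
`ker X₀ ⊆ ker X`. Cauchy–Schwarz gives `(uᵀX₀u) X₀ ⪰ (X₀u)(X₀u)ᵀ`, so the face property puts
every rank-one `wwᵀ` with `w ∈ range X₀` into `F`. With `P` the orthogonal projection onto
`range X₀` we have `PXP = X` for `X ∈ F`; hence for `Z ∈ F*` the matrix `PZP` is positive
semidefinite and `Z - PZP ∈ F^⊥`.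
-/

open scoped ComplexOrder

namespace Matrix

section RCLike

variable {ι 𝕜 : Type*} [Fintype ι] [RCLike 𝕜]

theorem PosSemidef.ker_add {A B : Matrix ι ι 𝕜} (hA : A.PosSemidef) (hB : B.PosSemidef) :
    LinearMap.ker (A + B).mulVecLin = LinearMap.ker A.mulVecLin ⊓ LinearMap.ker B.mulVecLin := by
  refine le_antisymm (fun v hv => ?_) fun v ⟨hvA, hvB⟩ => ?_
  · simp only [LinearMap.mem_ker, mulVecLin_apply, add_mulVec] at hv
    have hq : star v ⬝ᵥ A *ᵥ v + star v ⬝ᵥ B *ᵥ v = 0 := by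
      rw [← dotProduct_add, hv, dotProduct_zero]
    obtain ⟨hqA, hqB⟩ := (add_eq_zero_iff_of_nonneg (hA.dotProduct_mulVec_nonneg v)
      (hB.dotProduct_mulVec_nonneg v)).1 hq
    exact ⟨(hA.dotProduct_mulVec_zero_iff v).1 hqA, (hB.dotProduct_mulVec_zero_iff v).1 hqB⟩
  · simp_all

theorem exists_ker_le_of_add_mem {S : Set (Matrix ι ι 𝕜)} (hS : S.Nonempty)
    (hpsd : ∀ X ∈ S, X.PosSemidef) (hadd : ∀ X ∈ S, ∀ Y ∈ S, X + Y ∈ S) :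
    ∃ X₀ ∈ S, ∀ X ∈ S, LinearMap.ker X₀.mulVecLin ≤ LinearMap.ker X.mulVecLin := by
  let nullity (X : Matrix ι ι 𝕜) := Module.finrank 𝕜 (LinearMap.ker X.mulVecLin)
  set X₀ := Function.argminOn nullity S hS
  have hX₀ : X₀ ∈ S := Function.argminOn_mem _ _ _
  refine ⟨X₀, hX₀, fun X hX => inf_eq_left.1 ?_⟩
  have hker := (hpsd X₀ hX₀).ker_add (hpsd X hX)
  rw [← hker]
  exact Submodule.eq_of_le_of_finrank_le (hker ▸ inf_le_left)
    (Function.argminOn_le nullity S (hadd X₀ hX₀ X hX))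

theorem IsHermitian.exists_range_projection [DecidableEq ι] {A : Matrix ι ι 𝕜}
    (hA : A.IsHermitian) : ∃ P R : Matrix ι ι 𝕜, P.IsHermitian ∧ A * P = A ∧ A * R = P := by
  have hA' : IsSelfAdjoint A := hA
  have hcont (f : ℝ → ℝ) : ContinuousOn f (spectrum ℝ A) := A.finite_real_spectrum.continuousOn f
  have hmul (f : ℝ → ℝ) : A * cfc f A = cfc (fun x => x * f x) A := by
    conv_lhs => enter [1]; rw [← cfc_id' ℝ A]
    rw [← cfc_mul _ _ A (hcont _) (hcont _)]
  -- since `0⁻¹ = 0`, `x * x⁻¹` is the indicator of `x ≠ 0`, so `P` projects onto the range of `A`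
  refine ⟨cfc (fun x : ℝ => x * x⁻¹) A, cfc (fun x : ℝ => x⁻¹) A, cfc_predicate _ A, ?_, hmul _⟩
  rw [hmul]
  conv_rhs => rw [← cfc_id' ℝ A]
  exact cfc_congr fun x _ => by rw [← mul_assoc, mul_self_mul_inv]

end RCLike

theorem mul_eq_of_ker_le {ι κ κ' R : Type*} [Fintype ι] [CommRing R] {A : Matrix κ ι R}
    {B : Matrix κ' ι R} {P : Matrix ι ι R}
    (hker : LinearMap.ker A.mulVecLin ≤ LinearMap.ker B.mulVecLin) (hA : A * P = A) :
    B * P = B := by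
  refine ext_iff_mulVec.2 fun v => ?_
  have hv : P *ᵥ v - v ∈ LinearMap.ker A.mulVecLin := by
    simp [mulVec_sub, mulVec_mulVec, hA]
  simpa [mulVec_sub, mulVec_mulVec, sub_eq_zero] using hker hv

theorem PosSemidef.posSemidef_smul_sub_vecMulVec {ι : Type*} [Fintype ι] {A : Matrix ι ι ℝ}
    (hA : A.PosSemidef) (u : ι → ℝ) :
    ((u ⬝ᵥ A *ᵥ u) • A - vecMulVec (A *ᵥ u) (A *ᵥ u)).PosSemidef := by
  classical
  have hAt : Aᵀ = A := (by simpa using hA.isHermitian : A.IsSymm).eq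
  refine .of_dotProduct_mulVec_nonneg ?_ fun y => ?_
  · simp [IsSymm, hAt, transpose_vecMulVec]
  · have hCS := (toBilin' A).apply_mul_apply_le_of_forall_zero_le
      (fun x => by simpa [toBilin'_apply'] using hA.dotProduct_mulVec_nonneg x) u y
    have hwy : (A *ᵥ u) ⬝ᵥ y = u ⬝ᵥ A *ᵥ y := by
      rw [← vecMul_transpose, hAt, dotProduct_mulVec]
    simp only [toBilin'_apply'] at hCS
    simpa [sub_mulVec, smul_mulVec, vecMulVec_mulVec, hwy] using hCS

end Matrix

section Face

variable {n : ℕ} {C F : Set (Mat n)}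

theorem IsFaceOf.smul_mem_s3 (hC : ∀ x ∈ C, ∀ c : ℝ, 0 ≤ c → c • x ∈ C) (hF : IsFaceOf C F)
    {x : Mat n} (hx : x ∈ F) {c : ℝ} (hc : 0 ≤ c) : c • x ∈ F := by
  rcases hc.eq_or_lt with rfl | hc
  · have h2x : (2 : ℝ) • x ∈ C := hC x (hF.1 hx) 2 (by norm_num)
    refine (hF.2.2 _ (hC x (hF.1 hx) 0 le_rfl) _ h2x (1 / 2) (by norm_num) (by norm_num) ?_).1
    rwa [zero_smul, smul_zero, zero_add, smul_smul, show (1 - 1 / 2 : ℝ) * 2 = 1 by norm_num,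
      one_smul]
  -- `x` is the `(1 + c)⁻¹`-combination of `c • x` and `c⁻¹ • x`
  refine (hF.2.2 _ (hC x (hF.1 hx) c hc.le) _ (hC x (hF.1 hx) c⁻¹ (inv_nonneg.2 hc.le))
    (1 + c)⁻¹ (by positivity) (inv_lt_one_of_one_lt₀ (by linarith)) ?_).1
  rwa [smul_smul, smul_smul, ← add_smul, show (1 + c)⁻¹ * c + (1 - (1 + c)⁻¹) * c⁻¹ = 1 by
    field_simp; ring, one_smul]

theorem IsFaceOf.add_mem (hC : ∀ x ∈ C, ∀ c : ℝ, 0 ≤ c → c • x ∈ C) (hF : IsFaceOf C F)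
    {x y : Mat n} (hx : x ∈ F) (hy : y ∈ F) : x + y ∈ F := by
  have hmid := hF.2.1 hx hy (by norm_num : (0 : ℝ) ≤ 1 / 2) (by norm_num : (0 : ℝ) ≤ 1 / 2)
    (by norm_num)
  simpa [← smul_add, smul_smul] using hF.smul_mem_s3 hC hmid (by norm_num : (0 : ℝ) ≤ 2)

theorem IsFaceOf.mem_of_add_mem_left (hC : ∀ x ∈ C, ∀ c : ℝ, 0 ≤ c → c • x ∈ C)
    (hF : IsFaceOf C F) {x y : Mat n} (hx : x ∈ C) (hy : y ∈ C) (hxy : x + y ∈ F) : x ∈ F := by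
  have h2x := (hF.2.2 _ (hC x hx 2 (by norm_num)) _ (hC y hy 2 (by norm_num)) (1 / 2)
    (by norm_num) (by norm_num) (by norm_num [smul_smul, hxy])).1
  simpa [smul_smul] using hF.smul_mem_s3 hC h2x (by norm_num : (0 : ℝ) ≤ 1 / 2)

end Face

section InnerProduct

variable {n : ℕ}

theorem ip_eq_trace (A B : Mat n) : ip A B = (Aᵀ * B).trace := by
  simp only [ip, trace, diag, mul_apply, transpose_apply]
  exact Finset.sum_comm

theorem ip_add_left (A B X : Mat n) : ip (A + B) X = ip A X + ip B X := by
  simp only [ip, Matrix.add_apply, add_mul, Finset.sum_add_distrib]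

theorem ip_sub_left (A B X : Mat n) : ip (A - B) X = ip A X - ip B X := by
  simp only [ip, Matrix.sub_apply, sub_mul, Finset.sum_sub_distrib]

theorem ip_vecMulVec (Z : Mat n) (w : Fin n → ℝ) : ip Z (vecMulVec w w) = w ⬝ᵥ Z *ᵥ w := by
  simp only [ip, vecMulVec_apply, dotProduct, mulVec, Finset.mul_sum]
  exact Finset.sum_congr rfl fun i _ => Finset.sum_congr rfl fun j _ => by ring

theorem ip_nonneg_of_posSemidef {A X : Mat n} (hA : A.PosSemidef) (hX : X.PosSemidef) :
    0 ≤ ip A X := by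
  open scoped MatrixOrder in
  obtain ⟨B, rfl⟩ := CStarAlgebra.nonneg_iff_eq_star_mul_self.mp hX.nonneg
  rw [ip_eq_trace, (by simpa using hA.isHermitian : A.IsSymm).eq, star_eq_conjTranspose,
    ← Matrix.mul_assoc, trace_mul_comm, ← Matrix.mul_assoc]
  exact (hA.mul_mul_conjTranspose_same B).trace_nonneg

theorem ip_mul_mul_of_mul_eq {P X : Mat n} (Z : Mat n) (hP : P.IsSymm) (hX : X.IsSymm)
    (hXP : X * P = X) : ip (P * Z * P) X = ip Z X := by
  have hPX : P * X = X := by simpa [hP.eq, hX.eq] using congrArg transpose hXP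
  rw [ip_eq_trace, ip_eq_trace, transpose_mul, transpose_mul, hP.eq, Matrix.mul_assoc,
    Matrix.mul_assoc, hPX, trace_mul_comm, Matrix.mul_assoc, hXP, trace_mul_comm]

theorem posSemidef_mul_mul_of_ip_vecMulVec_nonneg {P Z : Mat n} (hP : P.IsSymm) (hZ : Z.IsSymm)
    (h : ∀ v, 0 ≤ ip Z (vecMulVec (P *ᵥ v) (P *ᵥ v))) : (P * Z * P).PosSemidef := by
  refine .of_dotProduct_mulVec_nonneg ?_ fun v => ?_
  · simp [IsSymm, hP.eq, hZ.eq, Matrix.mul_assoc]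
  · simpa [ip_vecMulVec, ← mulVec_mulVec, dotProduct_mulVec _ P, ← mulVec_transpose, hP.eq]
      using h v

end InnerProduct

section PsdFace

variable {n : ℕ} {F : Set (Mat n)}

theorem psdCone_smul_mem : ∀ x ∈ psdCone n, ∀ c : ℝ, 0 ≤ c → c • x ∈ psdCone n :=
  fun _ hx _ hc => hx.smul hc

theorem IsFaceOf.vecMulVec_mulVec_mem (hF : IsFaceOf (psdCone n) F) {X : Mat n} (hX : X ∈ F)
    (u : Fin n → ℝ) : vecMulVec (X *ᵥ u) (X *ᵥ u) ∈ F := by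
  have hXpsd : X.PosSemidef := hF.1 hX
  refine hF.mem_of_add_mem_left psdCone_smul_mem
    (by simpa [psdCone] using posSemidef_vecMulVec_self_star (X *ᵥ u))
    (hXpsd.posSemidef_smul_sub_vecMulVec u) ?_
  rw [add_sub_cancel]
  exact hF.smul_mem_s3 psdCone_smul_mem hX (by simpa using hXpsd.dotProduct_mulVec_nonneg u)

theorem IsFaceOf.exists_projection (hF : IsFaceOf (psdCone n) F) (hne : F.Nonempty) :
    ∃ P : Mat n, P.IsSymm ∧ (∀ X ∈ F, X * P = X) ∧ ∀ v, vecMulVec (P *ᵥ v) (P *ᵥ v) ∈ F := by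
  obtain ⟨X₀, hX₀, hker⟩ := exists_ker_le_of_add_mem hne hF.1
    fun X hX Y hY => hF.add_mem psdCone_smul_mem hX hY
  obtain ⟨P, R, hP, hX₀P, hX₀R⟩ := (hF.1 hX₀).isHermitian.exists_range_projection
  refine ⟨P, by simpa using hP, fun X hX => mul_eq_of_ker_le (hker X hX) hX₀P, fun v => ?_⟩
  rw [← hX₀R, ← mulVec_mulVec]
  exact hF.vecMulVec_mulVec_mem hX₀ _

end PsdFace

/-- For every face `F` of `S^n_+`, the dual cone
`F* = {Z ∈ S^n : Z • X ≥ 0 for all X ∈ F}` equals `S^n_+ + F^⊥`. -/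
theorem dualCone_eq_psdCone_add_perp (n : ℕ) (F : Set (Mat n))
    (hF : IsFaceOf (psdCone n) F) :
    {Z : Mat n | Z.IsSymm ∧ ∀ X ∈ F, 0 ≤ ip Z X} =
      {W : Mat n | ∃ A ∈ psdCone n, ∃ Z ∈ perp F, W = A + Z} := by
  ext W
  constructor
  · rintro ⟨hW, hWF⟩
    rcases F.eq_empty_or_nonempty with rfl | hne
    · exact ⟨0, .zero, W, ⟨hW, by simp⟩, (zero_add W).symm⟩
    obtain ⟨P, hP, hFP, hPF⟩ := hF.exists_projection hne
    have hA : (P * W * P).PosSemidef :=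
      posSemidef_mul_mul_of_ip_vecMulVec_nonneg hP hW fun v => hWF _ (hPF v)
    refine ⟨P * W * P, hA, W - P * W * P,
      ⟨hW.sub (by simpa using hA.isHermitian), fun X hXF => ?_⟩, by abel⟩
    have hX : X.IsSymm := by simpa using (hF.1 hXF).isHermitian
    rw [ip_sub_left, ip_mul_mul_of_mul_eq W hP hX (hFP X hXF), sub_self]
  · rintro ⟨A, hA, Z, ⟨hZ, hZF⟩, rfl⟩
    refine ⟨(by simpa using hA.isHermitian : A.IsSymm).add hZ, fun X hX => ?_⟩
    rw [ip_add_left, hZF X hX, add_zero]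
    exact ip_nonneg_of_posSemidef hA (hF.1 hX)
end
end

section
/- If the primal and dual SDPs both have strictly feasible points, then the image of the primal optimal solution set under the projection (y, Z) ↦ Z is bounded, even though the set of optimal (y, Z) pairs may be unbounded. -/
/-!
Fix a strictly feasible dual point `X ≻ 0` and `ε > 0` with `X ⪰ ε I`. For every primal feasible
`(y, Z)`, pairing the constraint `∑ y_k A_k + Z = A₀` with `X` gives `Z • X = A₀ • X - bᵀy`, and
`Z • X ≥ ε tr Z` because `Z • (X - ε I) ≥ 0`. On the optimal face `bᵀy` is constant, so `tr Z` is
bounded there, and the Frobenius norm of a positive semidefinite matrix is at most its trace.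
-/

open Matrix Set

noncomputable section

/-- Frobenius norm. -/
def frobNorm {n : ℕ} (X : Mat n) : ℝ := Real.sqrt (∑ i, ∑ j, (X i j) ^ 2)

def primalVals {n m : ℕ} (A₀ : Mat n) (A : Fin m → Mat n) (b : Fin m → ℝ) : Set ℝ :=
  {v | ∃ y : Fin m → ℝ, (A₀ - ∑ k, y k • A k).PosSemidef ∧ v = ∑ k, b k * y k}

theorem Matrix.PosSemidef.sq_apply_le_mul_diag {ι : Type*} [Fintype ι] {Z : Matrix ι ι ℝ}
    (hZ : Z.PosSemidef) (i j : ι) : Z i j ^ 2 ≤ Z i i * Z j j := by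
  have h := (hZ.submatrix ![i, j]).det_nonneg
  simp only [det_fin_two, submatrix_apply, Matrix.cons_val_zero, Matrix.cons_val_one] at h
  have hsymm : Z j i = Z i j := by simpa using hZ.1.apply i j
  rw [hsymm, ← sq] at h
  linarith

theorem Matrix.PosDef.exists_pos_sub_smul_one_posSemidef {ι : Type*} [Fintype ι] [DecidableEq ι]
    {X : Matrix ι ι ℝ} (hX : X.PosDef) : ∃ ε > (0 : ℝ), (X - ε • 1).PosSemidef := by
  open scoped MatrixOrder in
  rcases subsingleton_or_nontrivial (Matrix ι ι ℝ) with h | h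
  · exact ⟨1, one_pos, by simpa only [Subsingleton.elim _ (0 : Matrix ι ι ℝ)] using .zero⟩
  · obtain ⟨ε, hε, hle⟩ := (CFC.exists_pos_algebraMap_le_iff hX.isHermitian).2
      fun x hx ↦ (isStrictlyPositive_iff_posDef.2 hX).spectrum_pos hx
    rw [Algebra.algebraMap_eq_smul_one] at hle
    exact ⟨ε, hε, hle⟩

theorem frobNorm_le_trace {n : ℕ} {Z : Mat n} (hZ : Z.PosSemidef) : frobNorm Z ≤ Z.trace := by
  have hsq : ∑ i, ∑ j, Z i j ^ 2 ≤ Z.trace ^ 2 := by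
    rw [trace, sq, Finset.sum_mul_sum]
    exact Finset.sum_le_sum fun i _ ↦ Finset.sum_le_sum fun j _ ↦ hZ.sq_apply_le_mul_diag i j
  exact (Real.sqrt_le_left hZ.trace_nonneg).2 hsq

-- Schur product theorem: `Z ⊙ W ⪰ 0`, and `ip Z W = 𝟙ᵀ (Z ⊙ W) 𝟙`.
theorem ip_nonneg {n : ℕ} {Z W : Mat n} (hZ : Z.PosSemidef) (hW : W.PosSemidef) : 0 ≤ ip Z W := by
  have := (hZ.hadamard hW).dotProduct_mulVec_nonneg 1
  simpa [ip, dotProduct, mulVec, Finset.mul_sum] using this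

theorem ip_eq_trace_transpose_mul {n : ℕ} (A B : Mat n) : ip A B = (Aᵀ * B).trace := by
  simp only [ip, trace, diag, mul_apply, transpose_apply]
  exact Finset.sum_comm

theorem ip_sub_smul_one {n : ℕ} (Z X : Mat n) (ε : ℝ) :
    ip Z (X - ε • 1) = ip Z X - ε * Z.trace := by
  simp [ip_eq_trace_transpose_mul, mul_sub, trace_sub]

theorem ip_sub_sum_smul {n m : ℕ} (A₀ X : Mat n) (A : Fin m → Mat n) (y : Fin m → ℝ) :
    ip (A₀ - ∑ k, y k • A k) X = ip A₀ X - ∑ k, y k * ip (A k) X := by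
  simp [ip_eq_trace_transpose_mul, transpose_sum, sub_mul, Finset.sum_mul, trace_sub, trace_sum]

theorem ip_eq_sub_of_feasible {n m : ℕ} {A₀ X Z : Mat n} {A : Fin m → Mat n} {b y : Fin m → ℝ}
    (hX : ∀ k, ip (A k) X = b k) (hZ : ∑ k, y k • A k + Z = A₀) :
    ip Z X = ip A₀ X - ∑ k, b k * y k := by
  rw [eq_sub_of_add_eq' hZ, ip_sub_sum_smul]
  simp only [hX, mul_comm]

theorem frobNorm_le_of_feasible {n m : ℕ} {A₀ X Z : Mat n} {A : Fin m → Mat n} {b y : Fin m → ℝ}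
    {ε : ℝ} (hε : 0 < ε) (hXε : (X - ε • 1).PosSemidef) (hX : ∀ k, ip (A k) X = b k)
    (hZ : Z.PosSemidef) (hfeas : ∑ k, y k • A k + Z = A₀) :
    frobNorm Z ≤ (ip A₀ X - ∑ k, b k * y k) / ε := by
  have htrace : ε * Z.trace ≤ ip Z X := by
    have := ip_nonneg hZ hXε
    rw [ip_sub_smul_one] at this
    linarith
  rw [le_div_iff₀ hε, ← ip_eq_sub_of_feasible hX hfeas]
  calc frobNorm Z * ε ≤ Z.trace * ε := by gcongr; exact frobNorm_le_trace hZ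
    _ ≤ ip Z X := by linarith

theorem primal_opt_slack_bounded_general (n m : ℕ)
    (A₀ : Mat n) (A : Fin m → Mat n) (b : Fin m → ℝ)
    (hDstrict : ∃ X : Mat n, X.PosDef ∧ ∀ k, ip (A k) X = b k) :
    ∃ R : ℝ, ∀ Z : Mat n,
      (∃ y : Fin m → ℝ, (∑ k, y k • A k) + Z = A₀ ∧ Z.PosSemidef ∧
        (∑ k, b k * y k) = sSup (primalVals A₀ A b)) →
      frobNorm Z ≤ R := by
  obtain ⟨X, hXpos, hX⟩ := hDstrict
  obtain ⟨ε, hε, hXε⟩ := hXpos.exists_pos_sub_smul_one_posSemidef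
  refine ⟨(ip A₀ X - sSup (primalVals A₀ A b)) / ε, ?_⟩
  rintro Z ⟨y, hfeas, hZ, hopt⟩
  rw [← hopt]
  exact frobNorm_le_of_feasible hε hXε hX hZ hfeas

/-- If both the primal SDP `sup{bᵀy : ∑ y_k A_k + Z = A₀, Z ∈ S^n_+}` and the dual
SDP `inf{A₀ • X : A_k • X = b_k, X ∈ S^n_+}` are strictly feasible, then the image
of the primal optimal solution set under the projection `(y, Z) ↦ Z` is bounded,
even though the set of optimal pairs `(y, Z)` may be unbounded. -/
theorem primal_opt_slack_bounded (n m : ℕ)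
    (A₀ : Mat n) (A : Fin m → Mat n) (b : Fin m → ℝ)
    (hA₀ : A₀.IsSymm) (hA : ∀ k, (A k).IsSymm)
    (hPstrict : ∃ y : Fin m → ℝ, (A₀ - ∑ k, y k • A k).PosDef)
    (hDstrict : ∃ X : Mat n, X.PosDef ∧ ∀ k, ip (A k) X = b k) :
    ∃ R : ℝ, ∀ Z : Mat n,
      (∃ y : Fin m → ℝ, (∑ k, y k • A k) + Z = A₀ ∧ Z.PosSemidef ∧
        (∑ k, b k * y k) = sSup (primalVals A₀ A b)) →
      frobNorm Z ≤ R :=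
  primal_opt_slack_bounded_general n m A₀ A b hDstrict
end
end

section
/- Suppose X₀ is a strictly feasible (i.e., positive definite feasible) point of the SDP inf{A₀ • X : A_k • X = b_k (k=1,…,m), X ∈ S^n_+}. If for each t ∈ [0, δ] the perturbed feasibility system A_k(t) • X = b_k(t), X ∈ S^n_+ is feasible and rank⟨A₁(t),…,A_m(t)⟩ = rank⟨A₁,…,A_m⟩, then there exist strictly feasible points X_t of the perturbed problems with X_t → X₀ as t → 0. -/
open Matrix Set Filter Topology

noncomputable section

/-!
Choose a linearly independent subfamily `A_i(0)`, `i ∈ κ`, spanning all the `A_k(0)`. Its Gram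
matrix is invertible at `t = 0`, hence near `0`, so the subfamily's constraints can be restored
by a correction `Z_t = ∑ μ_i(t) A_i(t)` of `X₀` with `μ(t) → 0`. Near `0` the subfamily stays
linearly independent, so by the rank hypothesis it still spans every `A_k(t)`, and the
feasibility of the perturbed system then forces the remaining constraints as well. Finally
`X₀ + Z_t` is symmetric and tends to `X₀`, and positive definiteness is an open condition
among symmetric matrices.
-/

open Module Submodule
open scoped RealInnerProductSpace

theorem Matrix.exists_tendsto_zero_mulVec_eq {ι α 𝕜 : Type*} [Fintype ι] [DecidableEq ι]
    [NontriviallyNormedField 𝕜] {l : Filter α} {G : α → Matrix ι ι 𝕜} {G₀ : Matrix ι ι 𝕜}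
    (hG : Tendsto G l (𝓝 G₀)) (hG₀ : G₀.det ≠ 0) {c : α → ι → 𝕜} (hc : Tendsto c l (𝓝 0)) :
    ∃ μ : α → ι → 𝕜, Tendsto μ l (𝓝 0) ∧ ∀ᶠ t in l, G t *ᵥ μ t = c t := by
  refine ⟨fun t => (G t)⁻¹ *ᵥ c t, ?_, ?_⟩
  · have hinv : ContinuousAt Inv.inv G₀ :=
      continuousAt_matrix_inv G₀ (by simpa [Ring.inverse_eq_inv'] using continuousAt_inv₀ hG₀)
    have := ((continuous_fst.matrix_mulVec continuous_snd).tendsto _).comp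
      ((hinv.tendsto.comp hG).prodMk_nhds hc)
    rwa [mulVec_zero] at this
  · have hdet : Tendsto (fun t => (G t).det) l (𝓝 G₀.det) :=
      (continuous_id.matrix_det.tendsto G₀).comp hG
    filter_upwards [hdet.eventually_ne hG₀] with t ht
    rw [mulVec_mulVec, mul_nonsing_inv _ (isUnit_iff_ne_zero.2 ht), one_mulVec]

theorem Matrix.PosDef.eventually_posDef {ι α : Type*} [Fintype ι] {l : Filter α}
    {M : α → Matrix ι ι ℝ} {M₀ : Matrix ι ι ℝ} (hM₀ : M₀.PosDef) (hM : Tendsto M l (𝓝 M₀))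
    (hherm : ∀ᶠ t in l, (M t).IsHermitian) : ∀ᶠ t in l, (M t).PosDef := by
  have hsphere : ∀ᶠ N in 𝓝 M₀, ∀ u ∈ Metric.sphere (0 : ι → ℝ) 1, 0 < u ⬝ᵥ N *ᵥ u := by
    refine (isCompact_sphere 0 1).eventually_forall_of_forall_eventually fun u hu => ?_
    have hcont : Continuous fun p : Matrix ι ι ℝ × (ι → ℝ) => p.2 ⬝ᵥ p.1 *ᵥ p.2 := by fun_prop
    have hu : u ≠ 0 := ne_zero_of_mem_sphere one_ne_zero ⟨u, hu⟩
    exact continuousAt_const.eventually_lt hcont.continuousAt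
      (by simpa using hM₀.dotProduct_mulVec_pos hu)
  filter_upwards [hM.eventually hsphere, hherm] with t ht hherm
  refine .of_dotProduct_mulVec_pos hherm fun x hx => ?_
  have hnorm : 0 < ‖x‖ := norm_pos_iff.2 hx
  have hu : ‖x‖⁻¹ • x ∈ Metric.sphere (0 : ι → ℝ) 1 := by simp [norm_smul, hnorm.ne']
  have hpos := ht _ hu
  simp only [mulVec_smul, dotProduct_smul, smul_dotProduct, smul_eq_mul, ← mul_assoc] at hpos
  rw [star_trivial]
  exact pos_of_mul_pos_right hpos (by positivity)

theorem exists_Icc_of_eventually_nhdsWithin_Icc {α : Type*} [LinearOrder α] [TopologicalSpace α]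
    [OrderTopology α] [DenselyOrdered α] {a b : α} (hab : a < b) {p : α → Prop}
    (h : ∀ᶠ t in 𝓝[Icc a b] a, p t) : ∃ c ∈ Ioc a b, ∀ t ∈ Icc a c, p t := by
  rw [nhdsWithin_Icc_eq_nhdsGE hab] at h
  obtain ⟨u, ⟨hau, hub⟩, hu⟩ := (mem_nhdsGE_iff_exists_mem_Ioc_Ico_subset hab).1 h
  obtain ⟨c, hac, hcu⟩ := exists_between hau
  exact ⟨c, ⟨hac, hcu.le.trans hub⟩, fun t ht => hu ⟨ht.1, ht.2.trans_lt hcu⟩⟩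

section InnerProductSpace

variable {𝕜 E ι α : Type*} [RCLike 𝕜] [NormedAddCommGroup E] [InnerProductSpace 𝕜 E]
  {l : Filter α}

local notation "⟪" x ", " y "⟫" => @inner 𝕜 _ _ x y

theorem continuous_gram : Continuous (gram 𝕜 : (ι → E) → Matrix ι ι 𝕜) :=
  continuous_pi fun i => continuous_pi fun j => (continuous_apply i).inner (continuous_apply j)

theorem inner_sum_smul_eq_gram_mulVec [Fintype ι] (v : ι → E) (μ : ι → 𝕜) (i : ι) :
    ⟪v i, ∑ j, μ j • v j⟫ = (gram 𝕜 v *ᵥ μ) i := by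
  simp [inner_sum, inner_smul_right, mulVec, dotProduct, gram_apply, mul_comm]

theorem inner_eq_of_mem_span {v : ι → E} {a x y : E} (ha : a ∈ span 𝕜 (range v))
    (h : ∀ i, ⟪v i, x⟫ = ⟪v i, y⟫) : ⟪a, x⟫ = ⟪a, y⟫ := by
  induction ha using span_induction with
  | mem _ hv => obtain ⟨i, rfl⟩ := hv; exact h i
  | zero => simp
  | add _ _ _ _ hx hy => simp [inner_add_left, hx, hy]
  | smul _ _ _ h => simp [inner_smul_left, h]

theorem span_range_comp_eq_of_finrank_le [Fintype ι] {κ : Type*} [Finite κ] {v : κ → E}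
    {σ : ι → κ} (hli : LinearIndependent 𝕜 (v ∘ σ))
    (hrank : finrank 𝕜 (span 𝕜 (range v)) ≤ Fintype.card ι) :
    span 𝕜 (range (v ∘ σ)) = span 𝕜 (range v) :=
  have := FiniteDimensional.span_of_finite 𝕜 (finite_range v)
  eq_of_le_of_finrank_le (span_mono (range_comp_subset_range σ v))
    (hrank.trans (finrank_span_eq_card hli).ge)

section Tendsto

variable [Fintype ι] {v : α → ι → E} {v₀ : ι → E}

theorem LinearIndependent.eventually_of_tendsto (hv₀ : LinearIndependent 𝕜 v₀)
    (hv : Tendsto v l (𝓝 v₀)) : ∀ᶠ t in l, LinearIndependent 𝕜 (v t) := by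
  classical
  have hdet : Tendsto (fun t => (gram 𝕜 (v t)).det) l (𝓝 (gram 𝕜 v₀).det) :=
    (continuous_gram.matrix_det.tendsto v₀).comp hv
  filter_upwards [hdet.eventually_ne (det_gram_ne_zero_iff_linearIndependent.2 hv₀)]
    with t ht using det_gram_ne_zero_iff_linearIndependent.1 ht

theorem LinearIndependent.exists_tendsto_zero_inner_sum_smul_eq (hv₀ : LinearIndependent 𝕜 v₀)
    (hv : Tendsto v l (𝓝 v₀)) {c : α → ι → 𝕜} (hc : Tendsto c l (𝓝 0)) :
    ∃ μ : α → ι → 𝕜, Tendsto μ l (𝓝 0) ∧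
      ∀ᶠ t in l, ∀ i, ⟪v t i, ∑ j, μ t j • v t j⟫ = c t i := by
  classical
  have hG : Tendsto (fun t => gram 𝕜 (v t)) l (𝓝 (gram 𝕜 v₀)) :=
    (continuous_gram.tendsto v₀).comp hv
  obtain ⟨μ, hμ, hsolve⟩ :=
    exists_tendsto_zero_mulVec_eq hG (det_gram_ne_zero_iff_linearIndependent.2 hv₀) hc
  refine ⟨μ, hμ, hsolve.mono fun t ht i => ?_⟩
  rw [inner_sum_smul_eq_gram_mulVec, ht]

end Tendsto

theorem exists_tendsto_zero_perturbation_of_finrank_span_eq [Finite ι] {a : α → ι → E}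
    {a₀ : ι → E} (ha : Tendsto a l (𝓝 a₀)) {β : α → ι → 𝕜} {β₀ : ι → 𝕜}
    (hβ : Tendsto β l (𝓝 β₀)) {x₀ : E} (hx₀ : ∀ k, ⟪a₀ k, x₀⟫ = β₀ k)
    (hsolvable : ∀ᶠ t in l, ∃ y, ∀ k, ⟪a t k, y⟫ = β t k)
    (hrank : ∀ᶠ t in l, finrank 𝕜 (span 𝕜 (range (a t))) = finrank 𝕜 (span 𝕜 (range a₀))) :
    ∃ z : α → E, Tendsto z l (𝓝 0) ∧
      ∀ᶠ t in l, z t ∈ span 𝕜 (range (a t)) ∧ ∀ k, ⟪a t k, x₀ + z t⟫ = β t k := by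
  obtain ⟨κ, σ, hσ, hspan, hli⟩ := exists_linearIndependent' 𝕜 a₀
  have := Finite.of_injective σ hσ
  have := Fintype.ofFinite κ
  have haσ : Tendsto (fun t => a t ∘ σ) l (𝓝 (a₀ ∘ σ)) :=
    tendsto_pi_nhds.2 fun i => tendsto_pi_nhds.1 ha (σ i)
  have hres : Tendsto (fun t => β t ∘ σ - fun i => ⟪a t (σ i), x₀⟫) l (𝓝 0) := by
    refine tendsto_pi_nhds.2 fun i => ?_
    simpa [hx₀] using (tendsto_pi_nhds.1 hβ (σ i)).sub
      ((tendsto_pi_nhds.1 haσ i).inner (tendsto_const_nhds (x := x₀)))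
  obtain ⟨μ, hμ, hμsolve⟩ := hli.exists_tendsto_zero_inner_sum_smul_eq haσ hres
  refine ⟨fun t => ∑ j, μ t j • a t (σ j), ?_, ?_⟩
  · simpa using tendsto_finsetSum Finset.univ fun j _ =>
      (tendsto_pi_nhds.1 hμ j).smul (tendsto_pi_nhds.1 haσ j)
  filter_upwards [hμsolve, hli.eventually_of_tendsto haσ, hsolvable, hrank]
    with t hsolve hlit ⟨y, hy⟩ hrankt
  refine ⟨sum_mem fun j _ => smul_mem _ _ (subset_span ⟨σ j, rfl⟩), fun k => ?_⟩
  -- the constraints `a t ∘ σ` determine all the others, and `x₀ + z t` shares them with `y`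
  have hspant : span 𝕜 (range (a t ∘ σ)) = span 𝕜 (range (a t)) :=
    span_range_comp_eq_of_finrank_le hlit (by rw [hrankt, ← hspan, finrank_span_eq_card hli])
  have hk : a t k ∈ span 𝕜 (range (a t ∘ σ)) := hspant ▸ subset_span ⟨k, rfl⟩
  rw [inner_eq_of_mem_span hk (y := y) fun i => ?_, hy]
  have hi := hsolve i
  simp only [Function.comp_apply, Pi.sub_apply] at hi ⊢
  rw [inner_add_right, hi, hy, add_sub_cancel]

end InnerProductSpace

namespace Mat

variable {n : ℕ}

def flatten (n : ℕ) : Mat n ≃L[ℝ] EuclideanSpace ℝ (Fin n × Fin n) :=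
  ((LinearEquiv.curry ℝ ℝ (Fin n) (Fin n)).symm ≪≫ₗ
    (WithLp.linearEquiv 2 ℝ _).symm).toContinuousLinearEquiv

theorem flatten_apply (A : Mat n) : flatten n A = WithLp.toLp 2 fun p => A p.1 p.2 := rfl

theorem ip_eq_inner (A B : Mat n) : ip A B = ⟪flatten n A, flatten n B⟫ := by
  simp [ip, flatten_apply, PiLp.inner_apply, Fintype.sum_prod_type, mul_comm]

theorem span_range_flatten {ι : Type*} (f : ι → Mat n) :
    span ℝ (range fun i => flatten n (f i)) =
      (span ℝ (range f)).map (flatten n : Mat n →ₗ[ℝ] _) := by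
  rw [← span_image, ← range_comp]
  rfl

theorem finrank_span_range_flatten {ι : Type*} (f : ι → Mat n) :
    finrank ℝ (span ℝ (range fun i => flatten n (f i))) = finrank ℝ (span ℝ (range f)) := by
  rw [span_range_flatten]
  exact (flatten n).toLinearEquiv.finrank_map_eq _

theorem isHermitian_flatten_symm_of_mem_span {ι : Type*} {f : ι → Mat n}
    (hf : ∀ i, (f i).IsHermitian) {z : EuclideanSpace ℝ (Fin n × Fin n)}
    (hz : z ∈ span ℝ (range fun i => flatten n (f i))) : ((flatten n).symm z).IsHermitian := by
  rw [span_range_flatten] at hz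
  obtain ⟨y, hy, rfl⟩ := hz
  have : y ∈ selfAdjoint.submodule ℝ (Mat n) :=
    span_le.2 (range_subset_iff.2 fun i => (hf i).isSelfAdjoint) hy
  convert this.isHermitian
  exact (flatten n).symm_apply_apply y

end Mat

open Mat in
/-- If `X₀` is a strictly feasible point of the dual SDP, the perturbed systems
`A_k(t) • X = b_k(t), X ∈ S^n_+` are feasible on `[0, δ]`, and the rank of the span
of `A₁(t), …, A_m(t)` is constant, then there exist strictly feasible points `X_t`
of the perturbed problems with `X_t → X₀` as `t → 0`. -/
theorem perturbed_strictly_feasible_points_exist (n m : ℕ) (δ : ℝ) (hδ : 0 < δ)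
    (A : Fin m → ℝ → Mat n) (b : ℝ → Fin m → ℝ)
    (hAsymm : ∀ k t, (A k t).IsSymm)
    (hAcont : ∀ k, Tendsto (A k) (nhdsWithin 0 (Icc 0 δ)) (nhds (A k 0)))
    (hbcont : Tendsto b (nhdsWithin 0 (Icc 0 δ)) (nhds (b 0)))
    (X₀ : Mat n) (hX₀pd : X₀.PosDef) (hX₀feas : ∀ k, ip (A k 0) X₀ = b 0 k)
    (hfeas : ∀ t ∈ Icc (0:ℝ) δ, ∃ X : Mat n, X.PosSemidef ∧ ∀ k, ip (A k t) X = b t k)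
    (hrank : ∀ t ∈ Icc (0:ℝ) δ,
      Module.finrank ℝ ↥(Submodule.span ℝ (Set.range fun k => A k t)) =
        Module.finrank ℝ ↥(Submodule.span ℝ (Set.range fun k => A k 0))) :
    ∃ δ' : ℝ, 0 < δ' ∧ δ' ≤ δ ∧ ∃ X : ℝ → Mat n,
      (∀ t ∈ Icc (0:ℝ) δ', (X t).PosDef ∧ ∀ k, ip (A k t) (X t) = b t k) ∧
      Tendsto X (nhdsWithin 0 (Icc 0 δ')) (nhds X₀) := by
  have hIcc : ∀ᶠ t in 𝓝[Icc 0 δ] (0 : ℝ), t ∈ Icc 0 δ := self_mem_nhdsWithin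
  obtain ⟨Z, hZ, hZev⟩ := exists_tendsto_zero_perturbation_of_finrank_span_eq
    (a := fun t k => flatten n (A k t)) (x₀ := flatten n X₀)
    (tendsto_pi_nhds.2 fun k => ((flatten n).continuous.tendsto _).comp (hAcont k)) hbcont
    (by simpa only [ip_eq_inner] using hX₀feas)
    (hIcc.mono fun t ht => by
      obtain ⟨W, -, hW⟩ := hfeas t ht
      exact ⟨flatten n W, by simpa only [ip_eq_inner] using hW⟩)
    (hIcc.mono fun t ht => by simpa only [← finrank_span_range_flatten] using hrank t ht)
  set X := fun t => X₀ + (flatten n).symm (Z t)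
  have hX : Tendsto X (𝓝[Icc 0 δ] 0) (𝓝 X₀) := by
    simpa using tendsto_const_nhds.add (((flatten n).symm.continuous.tendsto 0).comp hZ)
  have hherm : ∀ᶠ t in 𝓝[Icc 0 δ] 0, (X t).IsHermitian :=
    hZev.mono fun t ht => hX₀pd.isHermitian.add <| isHermitian_flatten_symm_of_mem_span
      (fun k => isHermitian_iff_isSymm.2 (hAsymm k t)) ht.1
  obtain ⟨δ', ⟨hδ'pos, hδ'δ⟩, hδ'⟩ := exists_Icc_of_eventually_nhdsWithin_Icc hδ
    ((hX₀pd.eventually_posDef hX hherm).and hZev)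
  refine ⟨δ', hδ'pos, hδ'δ, X, fun t ht => ⟨(hδ' t ht).1, fun k => ?_⟩,
    hX.mono_left (nhdsWithin_mono _ (Icc_subset_Icc_right hδ'δ))⟩
  rw [ip_eq_inner, map_add, ContinuousLinearEquiv.apply_symm_apply]
  exact (hδ' t ht).2.2 k
end
end

section
/- Consider the 2×2 example with A₀ = [[0,0],[0,1]], A₁ = [[1,0],[0,0]], A₂ = A₃ = [[0,1],[1,0]], b = (2,2,2). Then the primal SDP sup{bᵀy : A₀ - Σ y_k A_k ∈ S²_+} and dual SDP inf{A₀ • X : A_k • X = b_k, X ∈ S²_+} are both strictly feasible (e.g., y = (-1,0,0) with slack the identity, and X = [[2,1],[1,1]]), yet replacing A₃ by A₃(t) = [[0,1+t],[1+t,0]] preserves rank⟨A₁,A₂,A₃(t)⟩ = rank⟨A₁,A₂,A₃⟩ while making the perturbed dual system A₁ • X = 2, A₂ • X = 2, A₃(t) • X = 2, X ∈ S²_+ infeasible for every t > 0. -/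
/-! The perturbation only rescales `A₃ = A₂` to `(1 + t) • A₂`, so the span of the constraint
matrices does not change; but then the constraints `A₂ • X = 2` and `A₃(t) • X = 2` force
`(1 + t) * 2 = 2`, which already rules out every `X` (semidefinite or not) once `t ≠ 0`. -/

open Matrix Set

noncomputable section

def exA₀ : Mat 2 := !![0, 0; 0, 1]

/-- The constraint matrices `A₁, A₂, A₃(t)` of the example, with `A₃` perturbed. -/
def exA (t : ℝ) : Fin 3 → Mat 2 :=
  ![!![1, 0; 0, 0], !![0, 1; 1, 0], !![0, 1 + t; 1 + t, 0]]

lemma ip_smul_left {n : ℕ} (c : ℝ) (A B : Mat n) : ip (c • A) B = c * ip A B := by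
  simp only [ip, Matrix.smul_apply, smul_eq_mul, Finset.mul_sum, mul_assoc]

lemma exA_eq_cons_smul (t : ℝ) : exA t = ![exA 0 0, exA 0 1, (1 + t) • exA 0 1] := by
  ext k i j
  fin_cases k <;> fin_cases i <;> fin_cases j <;> simp [exA]

lemma span_range_exA (t : ℝ) :
    Submodule.span ℝ (range (exA t)) = Submodule.span ℝ {exA 0 0, exA 0 1} := by
  rw [exA_eq_cons_smul, range_cons, range_cons, range_cons, range_empty, union_empty,
    ← singleton_union]
  simp only [Submodule.span_union]
  rw [sup_eq_left.mpr (Submodule.span_singleton_smul_le ℝ (1 + t) (exA 0 1))]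

lemma primal_slack_eq_one : exA₀ - ∑ k, (![-1, 0, 0] : Fin 3 → ℝ) k • exA 0 k = 1 := by
  rw [Fin.sum_univ_three]
  ext i j
  fin_cases i <;> fin_cases j <;> simp [exA, exA₀]

lemma posDef_dual_point : (!![2, 1; 1, 1] : Mat 2).PosDef := by
  have hB : IsUnit (!![1, 0; 1, 1] : Mat 2) := by
    simp [isUnit_iff_isUnit_det, det_fin_two]
  have hfactor : (!![2, 1; 1, 1] : Mat 2) = (!![1, 0; 1, 1] : Mat 2)ᴴ * !![1, 0; 1, 1] := by
    ext i j
    fin_cases i <;> fin_cases j <;> norm_num [mul_apply, Fin.sum_univ_two]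
  rw [hfactor]
  exact PosDef.conjTranspose_mul_self _ (mulVec_injective_iff_isUnit.mpr hB)

lemma ip_exA_zero_dual_point (k : Fin 3) : ip (exA 0 k) (!![2, 1; 1, 1] : Mat 2) = 2 := by
  fin_cases k <;> norm_num [ip, exA, Fin.sum_univ_two]

lemma not_forall_ip_exA_eq_two {t : ℝ} (ht : t ≠ 0) (X : Mat 2) :
    ¬ ∀ k, ip (exA t k) X = 2 := by
  intro hX
  have h1 : ip (exA 0 1) X = 2 := hX 1
  have h2 := hX 2
  rw [exA_eq_cons_smul, cons_val_two, tail_cons, head_cons, ip_smul_left, h1] at h2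
  exact ht (by linarith)

/-- In the 2×2 example, the primal and dual SDPs are strictly feasible
(witnessed by `y = (-1,0,0)` with identity slack and `X = [[2,1],[1,1]]`), the
perturbation `A₃(t)` preserves the rank of the span of the constraint matrices,
yet the perturbed dual system is infeasible for every `t > 0`. -/
theorem perturbation_preserving_rank_can_destroy_feasibility :
    ((exA₀ - ∑ k, (![-1, 0, 0] : Fin 3 → ℝ) k • exA 0 k) = 1 ∧
      (exA₀ - ∑ k, (![-1, 0, 0] : Fin 3 → ℝ) k • exA 0 k).PosDef) ∧
    ((!![2, 1; 1, 1] : Mat 2).PosDef ∧ ∀ k, ip (exA 0 k) (!![2, 1; 1, 1] : Mat 2) = 2) ∧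
    (∀ t : ℝ, Module.finrank ℝ ↥(Submodule.span ℝ (Set.range (exA t))) =
      Module.finrank ℝ ↥(Submodule.span ℝ (Set.range (exA 0)))) ∧
    (∀ t : ℝ, 0 < t →
      ¬ ∃ X : Mat 2, X.PosSemidef ∧ ∀ k, ip (exA t k) X = 2) := by
  refine ⟨⟨primal_slack_eq_one, primal_slack_eq_one ▸ PosDef.one⟩,
    ⟨posDef_dual_point, ip_exA_zero_dual_point⟩, fun t => ?_, ?_⟩
  · rw [span_range_exA, span_range_exA]
  · rintro t ht ⟨X, -, hX⟩
    exact not_forall_ip_exA_eq_two ht.ne' X hX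
end
end
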